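/- arXiv:2204.07308 — 3 statements merged into one kernel-verified Lean document; each statement's English description precedes it below -/
import Mathlib

section
/- Let h_1, ..., h_n : X → ℝ be hypotheses, y : X → ℝ a target, and μ a probability measure on X. Define the average hypothesis h̄(x) = (1/n) ∑_k h_k(x). Then the squared error of the average hypothesis equals the average squared error of the individual hypotheses minus the average squared discrepancy: E_x[(h̄(x) − y(x))²] = (1/n) ∑_k E_x[(h_k(x) − y(x))²] − (1/n) ∑_k E_x[(h_k(x) − h̄(x))²]. -/
open MeasureTheory Finset

/-! Pointwise, the sum of squared deviations of the `h k x` from `y x` splits, as in the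
parallel axis theorem, into their squared deviations from the mean plus `n` times the squared
deviation of the mean from `y x`. All functions are in `L²`, so the identity can be integrated
term by term. -/

theorem sum_sq_sub_eq_sum_sq_sub_mean_add {ι : Type*} (s : Finset ι) (a : ι → ℝ) (c : ℝ)
    (hs : s.Nonempty) :
    ∑ i ∈ s, (a i - c) ^ 2 =
      ∑ i ∈ s, (a i - (∑ j ∈ s, a j) / #s) ^ 2 + #s * ((∑ j ∈ s, a j) / #s - c) ^ 2 := by
  have hcard : (#s : ℝ) ≠ 0 := by exact_mod_cast hs.card_pos.ne'
  have expand : ∀ d : ℝ, ∑ i ∈ s, (a i - d) ^ 2 =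
      ∑ i ∈ s, a i ^ 2 - 2 * d * ∑ i ∈ s, a i + #s * d ^ 2 := by
    intro d
    simp only [sub_sq, sum_add_distrib, sum_sub_distrib, sum_const, nsmul_eq_mul,
      ← sum_mul, ← mul_sum]
    ring
  rw [expand, expand]
  field_simp
  ring

theorem sq_mean_sub_eq {ι : Type*} (s : Finset ι) (a : ι → ℝ) (c : ℝ) (hs : s.Nonempty) :
    ((∑ i ∈ s, a i) / #s - c) ^ 2 =
      (1 / #s : ℝ) * ∑ i ∈ s, (a i - c) ^ 2 -
      (1 / #s : ℝ) * ∑ i ∈ s, (a i - (∑ j ∈ s, a j) / #s) ^ 2 := by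
  have hcard : (#s : ℝ) ≠ 0 := by exact_mod_cast hs.card_pos.ne'
  rw [sum_sq_sub_eq_sum_sq_sub_mean_add s a c hs]
  field_simp
  ring

theorem integrable_sq_sub {X : Type*} [MeasurableSpace X] {μ : Measure X} {f g : X → ℝ}
    (hf : MemLp f 2 μ) (hg : MemLp g 2 μ) : Integrable (fun x => (f x - g x) ^ 2) μ :=
  (hf.sub hg).integrable_sq

theorem stmt_0_general {X : Type*} [MeasurableSpace X] (μ : Measure X)
    (n : ℕ) (hn : 0 < n) (h : Fin n → X → ℝ) (y : X → ℝ)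
    (hh : ∀ k, MemLp (h k) 2 μ) (hy : MemLp y 2 μ) :
    ∫ x, ((∑ k, h k x) / n - y x) ^ 2 ∂μ =
      (1 / n : ℝ) * ∑ k, ∫ x, (h k x - y x) ^ 2 ∂μ -
      (1 / n : ℝ) * ∑ k, ∫ x, (h k x - (∑ k', h k' x) / n) ^ 2 ∂μ := by
  have hne : (univ : Finset (Fin n)).Nonempty := univ_nonempty_iff.mpr ⟨⟨0, hn⟩⟩
  have pointwise (x : X) := sq_mean_sub_eq univ (h · x) (y x) hne
  simp only [card_univ, Fintype.card_fin] at pointwise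
  have hmean : MemLp (fun x => (∑ k, h k x) / n) 2 μ := by
    simpa only [div_eq_mul_inv] using (memLp_finsetSum univ fun k _ => hh k).mul_const _
  have herr (k : Fin n) (_ : k ∈ univ) := integrable_sq_sub (hh k) hy
  have hdisc (k : Fin n) (_ : k ∈ univ) := integrable_sq_sub (hh k) hmean
  rw [integral_congr_ae (ae_of_all μ pointwise),
    integral_sub ((integrable_finsetSum _ herr).const_mul _)
      ((integrable_finsetSum _ hdisc).const_mul _),
    integral_const_mul, integral_const_mul, integral_finsetSum _ herr,
    integral_finsetSum _ hdisc]

/-- Error-discrepancy (ambiguity) decomposition for ensembles. -/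
theorem stmt_0 {X : Type*} [MeasurableSpace X] (μ : Measure X) [IsProbabilityMeasure μ]
    (n : ℕ) (hn : 0 < n) (h : Fin n → X → ℝ) (y : X → ℝ)
    (hh : ∀ k, MemLp (h k) 2 μ) (hy : MemLp y 2 μ) :
    ∫ x, ((∑ k, h k x) / n - y x) ^ 2 ∂μ =
      (1 / n : ℝ) * ∑ k, ∫ x, (h k x - y x) ^ 2 ∂μ -
      (1 / n : ℝ) * ∑ k, ∫ x, (h k x - (∑ k', h k' x) / n) ^ 2 ∂μ :=
  stmt_0_general μ n hn h y hh hy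
end

section
/- Let C be a set of integrable classifiers c : Z → ℝ, let S and T be probability measures on Z, and let y : Z → ℝ be a labeling function. Define ε_D(c) = E_{z∼D}[|c(z) − y(z)|], ε_D(c₁,c₂) = E_{z∼D}[|c₁(z) − c₂(z)|], λ = inf_{c∈C}(ε_S(c) + ε_T(c)) (attained by some c* ∈ C), and d_{CΔC}(S,T) = 2·sup_{c₁,c₂∈C} |ε_T(c₁,c₂) − ε_S(c₁,c₂)|. Then for every c ∈ C: ε_T(c) ≤ ε_S(c) + λ + d_{CΔC}(S,T)/2. -/
open MeasureTheory

/-- Ben-David-style upper bound on the target error: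
ε_T(c) ≤ ε_S(c) + λ + d_{CΔC}(S,T)/2. -/
theorem stmt_3 {Z : Type*} [MeasurableSpace Z] (S T : Measure Z)
    [IsProbabilityMeasure S] [IsProbabilityMeasure T]
    (C : Set (Z → ℝ)) (y : Z → ℝ)
    (hIntS : ∀ c ∈ C, Integrable c S) (hIntT : ∀ c ∈ C, Integrable c T)
    (hyS : Integrable y S) (hyT : Integrable y T)
    (cstar : Z → ℝ) (hcstar : cstar ∈ C)
    -- λ = inf over C of the combined error, attained at cstar
    (hmin : ∀ c ∈ C,
      (∫ z, |cstar z - y z| ∂S) + ∫ z, |cstar z - y z| ∂T ≤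
        (∫ z, |c z - y z| ∂S) + ∫ z, |c z - y z| ∂T)
    (d : ℝ)
    (hbdd : BddAbove {r : ℝ | ∃ c₁ ∈ C, ∃ c₂ ∈ C,
      r = |(∫ z, |c₁ z - c₂ z| ∂T) - ∫ z, |c₁ z - c₂ z| ∂S|})
    (hd : d = 2 * sSup {r : ℝ | ∃ c₁ ∈ C, ∃ c₂ ∈ C,
      r = |(∫ z, |c₁ z - c₂ z| ∂T) - ∫ z, |c₁ z - c₂ z| ∂S|}) :
    ∀ c ∈ C,
      ∫ z, |c z - y z| ∂T ≤
        (∫ z, |c z - y z| ∂S) +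
          ((∫ z, |cstar z - y z| ∂S) + ∫ z, |cstar z - y z| ∂T) + d / 2 := by
  intro c hc
  have hcS := hIntS c hc
  have hcT := hIntT c hc
  have hsS := hIntS cstar hcstar
  have hsT := hIntT cstar hcstar
  -- triangle: ∫|c-y|∂T ≤ ∫|cstar-y|∂T + ∫|c-cstar|∂T
  have tri : ∀ (μ : Measure Z), Integrable c μ → Integrable cstar μ → Integrable y μ →
      ∫ z, |c z - y z| ∂μ ≤ (∫ z, |cstar z - y z| ∂μ) + ∫ z, |c z - cstar z| ∂μ := by
    intro μ h1 h2 h3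
    have i1 : Integrable (fun z => |cstar z - y z|) μ := (h2.sub h3).abs
    have i2 : Integrable (fun z => |c z - cstar z|) μ := (h1.sub h2).abs
    have i3 : Integrable (fun z => |c z - y z|) μ := (h1.sub h3).abs
    rw [← integral_add i1 i2]
    apply integral_mono i3 (i1.add i2)
    intro z
    have : c z - y z = (cstar z - y z) + (c z - cstar z) := by ring
    simp only [this]
    calc |(cstar z - y z) + (c z - cstar z)| ≤ |cstar z - y z| + |c z - cstar z| :=
        abs_add_le _ _
      _ = _ := rfl
  have h1 : ∫ z, |c z - y z| ∂T ≤ (∫ z, |cstar z - y z| ∂T) + ∫ z, |c z - cstar z| ∂T :=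
    tri T hcT hsT hyT
  have h2 : ∫ z, |c z - cstar z| ∂T ≤ (∫ z, |c z - cstar z| ∂S) + d / 2 := by
    have hmem : |(∫ z, |c z - cstar z| ∂T) - ∫ z, |c z - cstar z| ∂S| ∈
        {r : ℝ | ∃ c₁ ∈ C, ∃ c₂ ∈ C,
          r = |(∫ z, |c₁ z - c₂ z| ∂T) - ∫ z, |c₁ z - c₂ z| ∂S|} :=
      ⟨c, hc, cstar, hcstar, rfl⟩
    have := le_csSup hbdd hmem
    have habs : (∫ z, |c z - cstar z| ∂T) - ∫ z, |c z - cstar z| ∂S ≤ d / 2 := by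
      rw [hd]
      linarith [le_abs_self ((∫ z, |c z - cstar z| ∂T) - ∫ z, |c z - cstar z| ∂S)]
    linarith
  have h3 : ∫ z, |c z - cstar z| ∂S ≤ (∫ z, |c z - y z| ∂S) + ∫ z, |cstar z - y z| ∂S := by
    have i1 : Integrable (fun z => |c z - y z|) S := (hcS.sub hyS).abs
    have i2 : Integrable (fun z => |cstar z - y z|) S := (hsS.sub hyS).abs
    have i3 : Integrable (fun z => |c z - cstar z|) S := (hcS.sub hsS).abs
    rw [← integral_add i1 i2]
    apply integral_mono i3 (i1.add i2)
    intro z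
    have : c z - cstar z = (c z - y z) - (cstar z - y z) := by ring
    simp only [this]
    exact abs_sub _ _
  linarith
end

section
/- Under the decomposition of feature diversity into per-feature absolute deviations ∑_i |k_{ij} − mean_i(k_{ij})| for each feature index j, and given the constraint that max_i k_{ij} ≤ K for fixed K > 0, the diversity term for feature j is maximized (with value (4/3)K) only if min_i k_{ij} = 0 and max_i k_{ij} = K; in particular, at a maximizer, for every feature j there exists a generator i with k_{ij} > 0 (namely the one achieving the max) provided K > 0. -/
/-- If the per-feature diversity term attains its maximal value (4/3)K under
the bound 0 ≤ k i ≤ K, then some coefficient is 0, some equals K, and in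
particular some coefficient is positive (when K > 0). -/
theorem stmt_11 (K : ℝ) (hK : 0 < K) (k : Fin 3 → ℝ)
    (hk₀ : ∀ i, 0 ≤ k i) (hkK : ∀ i, k i ≤ K)
    (hmax : ∑ i, |k i - (∑ i', k i') / 3| = (4 / 3) * K) :
    (∃ i, k i = 0) ∧ (∃ i, k i = K) ∧ ∃ i, 0 < k i := by
  simp only [Fin.sum_univ_three] at hmax
  have h0 := hk₀ 0; have h1 := hk₀ 1; have h2 := hk₀ 2
  have hK0 := hkK 0; have hK1 := hkK 1; have hK2 := hkK 2
  have hzero : ∃ i, k i = 0 := by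
    by_contra h
    push_neg at h
    have p0 : 0 < k 0 := lt_of_le_of_ne h0 (Ne.symm (h 0))
    have p1 : 0 < k 1 := lt_of_le_of_ne h1 (Ne.symm (h 1))
    have p2 : 0 < k 2 := lt_of_le_of_ne h2 (Ne.symm (h 2))
    rcases abs_cases (k 0 - (k 0 + k 1 + k 2) / 3) with ⟨e0, _⟩ | ⟨e0, _⟩ <;>
      rcases abs_cases (k 1 - (k 0 + k 1 + k 2) / 3) with ⟨e1, _⟩ | ⟨e1, _⟩ <;>
        rcases abs_cases (k 2 - (k 0 + k 1 + k 2) / 3) with ⟨e2, _⟩ | ⟨e2, _⟩ <;>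
          rw [e0, e1, e2] at hmax <;> linarith
  have hKmax : ∃ i, k i = K := by
    by_contra h
    push_neg at h
    have q0 : k 0 < K := lt_of_le_of_ne hK0 (h 0)
    have q1 : k 1 < K := lt_of_le_of_ne hK1 (h 1)
    have q2 : k 2 < K := lt_of_le_of_ne hK2 (h 2)
    rcases abs_cases (k 0 - (k 0 + k 1 + k 2) / 3) with ⟨e0, _⟩ | ⟨e0, _⟩ <;>
      rcases abs_cases (k 1 - (k 0 + k 1 + k 2) / 3) with ⟨e1, _⟩ | ⟨e1, _⟩ <;>
        rcases abs_cases (k 2 - (k 0 + k 1 + k 2) / 3) with ⟨e2, _⟩ | ⟨e2, _⟩ <;>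
          rw [e0, e1, e2] at hmax <;> linarith
  exact ⟨hzero, hKmax, hKmax.elim fun i hi => ⟨i, hi ▸ hK⟩⟩
end
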